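/- arXiv:1607.00929 — 5 statements merged into one kernel-verified Lean document; each statement's English description precedes it below -/
import Mathlib

section
/- Let N ∈ ℕ, R > 0, s > 0, r > 0, and ε ∈ (0, min{N, s}). Then R^{2s-N} ∫_0^{r/R²} t^{s-1}/(t+1)^{N/2} dt ≤ (2/s) · R^{ε-N} · r^{s-ε/2}. -/
/-!
Since `t ^ α ≤ (t + 1) ^ β` for `0 ≤ α ≤ β`, the kernel `t ^ (s - 1) / (t + 1) ^ β` is dominated
by `t ^ (s - α - 1)`, whose integral over `[0, a]` is `a ^ (s - α) / (s - α)`. With `α = ε / 2`,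
`β = N / 2` and `a = r / R ^ 2`, the powers of `R` combine to `R ^ (ε - N)`, and
`1 / (s - ε / 2) ≤ 2 / s`.
-/

open MeasureTheory Set

namespace Real

lemma rpow_div_one_add_rpow_le {t a α β : ℝ} (ht : 0 < t) (hα : 0 ≤ α) (hαβ : α ≤ β) :
    t ^ a / (t + 1) ^ β ≤ t ^ (a - α) := calc
  t ^ a / (t + 1) ^ β ≤ t ^ a / t ^ α := by
    gcongr
    calc t ^ α ≤ (t + 1) ^ α := by gcongr; linarith
      _ ≤ (t + 1) ^ β := rpow_le_rpow_of_exponent_le (by linarith) hαβ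
  _ = t ^ (a - α) := (rpow_sub ht a α).symm

lemma integral_rpow_div_one_add_rpow_le {x s α β : ℝ} (hx : 0 ≤ x) (hα : 0 ≤ α) (hαβ : α ≤ β)
    (hαs : α < s) :
    ∫ t in (0 : ℝ)..x, t ^ (s - 1) / (t + 1) ^ β ≤ x ^ (s - α) / (s - α) := by
  have hdom : ∫ t in (0 : ℝ)..x, t ^ (s - 1) / (t + 1) ^ β ≤ ∫ t in (0 : ℝ)..x, t ^ (s - α - 1) := by
    rw [intervalIntegral.integral_of_le hx, intervalIntegral.integral_of_le hx]
    refine integral_mono_of_nonneg ?_ ?_ ?_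
    · filter_upwards [ae_restrict_mem measurableSet_Ioc] with t ht
      have : 0 < t := ht.1
      positivity
    · exact (intervalIntegral.intervalIntegrable_rpow' (by linarith)).1
    · filter_upwards [ae_restrict_mem measurableSet_Ioc] with t ht
      simpa only [sub_right_comm] using rpow_div_one_add_rpow_le ht.1 hα hαβ (a := s - 1)
  rwa [integral_rpow (Or.inl (by linarith)), sub_add_cancel, zero_rpow (by linarith), sub_zero]
    at hdom

end Real

theorem boggio_kernel_integral_bound_general
    (N : ℕ) (R s r ε : ℝ) (hR : 0 < R) (hs : 0 < s) (hr : 0 < r)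
    (hε : 0 < ε) (hεmin : ε < min (N : ℝ) s) :
    R ^ (2 * s - N) * ∫ t in (0:ℝ)..(r / R ^ 2), t ^ (s - 1) / (t + 1) ^ ((N : ℝ) / 2) ≤
      2 / s * R ^ (ε - N) * r ^ (s - ε / 2) := by
  obtain ⟨hεN, hεs⟩ := lt_min_iff.mp hεmin
  have hintegral := Real.integral_rpow_div_one_add_rpow_le (x := r / R ^ 2) (by positivity)
    (by positivity : 0 ≤ ε / 2) (by linarith : ε / 2 ≤ (N : ℝ) / 2) (by linarith : ε / 2 < s)
  have hscale : R ^ (2 * s - N) * (r / R ^ 2) ^ (s - ε / 2) = R ^ (ε - N) * r ^ (s - ε / 2) := by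
    rw [Real.div_rpow hr.le (by positivity), ← Real.rpow_natCast, ← Real.rpow_mul hR.le,
      mul_div_assoc', mul_comm, mul_div_assoc, ← Real.rpow_sub hR]
    ring_nf
  have hcoeff : 1 / (s - ε / 2) ≤ 2 / s := by
    rw [div_le_div_iff₀ (by linarith) hs]
    linarith
  calc R ^ (2 * s - N) * ∫ t in (0:ℝ)..(r / R ^ 2), t ^ (s - 1) / (t + 1) ^ ((N : ℝ) / 2)
      ≤ R ^ (2 * s - N) * ((r / R ^ 2) ^ (s - ε / 2) * (1 / (s - ε / 2))) := by
        rw [mul_one_div]; gcongr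
    _ = R ^ (ε - N) * r ^ (s - ε / 2) * (1 / (s - ε / 2)) := by rw [← hscale, mul_assoc]
    _ ≤ R ^ (ε - N) * r ^ (s - ε / 2) * (2 / s) := by gcongr
    _ = 2 / s * R ^ (ε - N) * r ^ (s - ε / 2) := by ring

theorem boggio_kernel_integral_bound
    (N : ℕ) (hN : 0 < N) (R s r ε : ℝ) (hR : 0 < R) (hs : 0 < s) (hr : 0 < r)
    (hε : 0 < ε) (hεmin : ε < min (N : ℝ) s) :
    R ^ (2 * s - N) * ∫ t in (0:ℝ)..(r / R ^ 2), t ^ (s - 1) / (t + 1) ^ ((N : ℝ) / 2) ≤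
      2 / s * R ^ (ε - N) * r ^ (s - ε / 2) :=
  boggio_kernel_integral_bound_general N R s r ε hR hs hr hε hεmin
end

section
/- Let N ∈ ℕ, y ∈ ℝ^N with |y| < 1, θ ∈ ℝ^N with |θ| = 1, and r ∈ (3/4, 1]. Then |r·y − θ|² ≥ |y − θ|²/2. -/
/-!
Write `r • y - θ = r • (y - θ) - (1 - r) • θ`. Since `‖y‖ ≤ ‖θ‖`, the vector `y - θ` makes an
obtuse angle with `θ`, so removing the second summand cannot shorten the first:
`‖r • y - θ‖ ≥ r ‖y - θ‖`, and `r² ≥ 9/16 ≥ 1/2`.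
-/

section

variable {E : Type*} [NormedAddCommGroup E] [InnerProductSpace ℝ E]

theorem real_inner_sub_self_nonpos_of_norm_le {y θ : E} (h : ‖y‖ ≤ ‖θ‖) :
    inner ℝ (y - θ) θ ≤ 0 := by
  have hyθ : inner ℝ y θ ≤ ‖y‖ * ‖θ‖ := real_inner_le_norm y θ
  rw [inner_sub_left, real_inner_self_eq_norm_sq]
  nlinarith [norm_nonneg θ]

theorem mul_norm_sub_le_norm_smul_sub {y θ : E} (h : ‖y‖ ≤ ‖θ‖) {r : ℝ} (hr₀ : 0 ≤ r)
    (hr₁ : r ≤ 1) : r * ‖y - θ‖ ≤ ‖r • y - θ‖ := by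
  have hsplit : r • y - θ = r • (y - θ) - (1 - r) • θ := by
    rw [smul_sub, sub_smul, one_smul]; abel
  have hobtuse : inner ℝ (r • (y - θ)) ((1 - r) • θ) ≤ 0 := by
    rw [real_inner_smul_left, real_inner_smul_right, ← mul_assoc]
    exact mul_nonpos_of_nonneg_of_nonpos (by nlinarith)
      (real_inner_sub_self_nonpos_of_norm_le h)
  have hsq : ‖r • (y - θ)‖ ^ 2 ≤ ‖r • y - θ‖ ^ 2 := by
    rw [hsplit, norm_sub_sq_real]
    nlinarith [sq_nonneg ‖(1 - r) • θ‖]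
  rwa [norm_smul, Real.norm_of_nonneg hr₀,
    pow_le_pow_iff_left₀ (by positivity) (norm_nonneg _) two_ne_zero] at hsq

end

theorem bracket_boundary_estimate
    (N : ℕ) (y θ : EuclideanSpace ℝ (Fin N)) (hy : ‖y‖ < 1) (hθ : ‖θ‖ = 1)
    (r : ℝ) (hr : r ∈ Set.Ioc (3/4 : ℝ) 1) :
    ‖y - θ‖ ^ 2 / 2 ≤ ‖r • y - θ‖ ^ 2 := by
  obtain ⟨hr₀, hr₁⟩ := hr
  have hyθ : ‖y‖ ≤ ‖θ‖ := hθ ▸ hy.le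
  have hscaled := mul_norm_sub_le_norm_smul_sub hyθ (by linarith) hr₁
  have hr_sq : 1 / 2 ≤ r ^ 2 := by nlinarith
  calc ‖y - θ‖ ^ 2 / 2 ≤ r ^ 2 * ‖y - θ‖ ^ 2 := by nlinarith [sq_nonneg ‖y - θ‖]
    _ = (r * ‖y - θ‖) ^ 2 := (mul_pow r _ 2).symm
    _ ≤ ‖r • y - θ‖ ^ 2 := by gcongr
end

section
/- Let N ∈ ℕ, s > 0, and define for x, y ∈ ℝ^N with x ≠ y: ρ(x,y) := (1−|x|²)₊(1−|y|²)₊ / |x−y|², and G_s(x,y) := k_{N,s} |x−y|^{2s−N} ∫_0^{ρ(x,y)} v^{s−1}(v+1)^{−N/2} dv with k_{N,s} = Γ(N/2)/(π^{N/2} 4^s Γ(s)²). Then for every x in the open unit ball B and every θ with |θ| = 1, the limit lim_{z→θ, z∈B} G_s(x,z)/(1−|z|²)^s exists and equals (k_{N,s}/s) · (1−|x|²)^s / |θ−x|^N. -/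
/-!
Writing `X = 1 - ‖x‖²`, `D = 1 - ‖z‖²` and `ρ = X D / ‖x - z‖²`, Boggio's formula gives
`G_s(x, z) / D^s = k_{N,s} X^s ‖x - z‖^{-N} · F(ρ) / ρ^s` with `F(r) = ∫_0^r v^{s-1} (v+1)^{-N/2} dv`.
As `z → θ` inside the ball, `ρ → 0⁺`, and `F(r) / r^s → 1/s` as `r → 0⁺` because
`(1+r)^{-N/2} r^s / s ≤ F(r) ≤ r^s / s`.
-/
open MeasureTheory

/-- The quantity `ρ(x,y) = (1-|x|²)₊(1-|y|²)₊ / |x-y|²` from Boggio's formula. -/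
noncomputable def boggioRho {N : ℕ} (x y : EuclideanSpace ℝ (Fin N)) : ℝ :=
  (max (1 - ‖x‖ ^ 2) 0) * (max (1 - ‖y‖ ^ 2) 0) / ‖x - y‖ ^ 2

/-- The constant `k_{N,s} = Γ(N/2)/(π^{N/2} 4^s Γ(s)²)` in Boggio's formula. -/
noncomputable def boggioConst (N : ℕ) (s : ℝ) : ℝ :=
  Real.Gamma ((N : ℝ) / 2) / (Real.pi ^ ((N : ℝ) / 2) * 4 ^ s * (Real.Gamma s) ^ 2)

/-- Boggio's Green function for `(-Δ)^s` in the unit ball. -/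
noncomputable def boggioG (N : ℕ) (s : ℝ) (x y : EuclideanSpace ℝ (Fin N)) : ℝ :=
  boggioConst N s * ‖x - y‖ ^ (2 * s - N) *
    ∫ v in (0:ℝ)..(boggioRho x y), v ^ (s - 1) * (v + 1) ^ (-((N : ℝ) / 2))

open Filter Topology Set

section IntegralNearZero

variable {s a r : ℝ}

lemma intervalIntegrable_rpow_sub_one_mul_add_one_rpow (hs : 0 < s) (hr : 0 ≤ r) :
    IntervalIntegrable (fun v : ℝ => v ^ (s - 1) * (v + 1) ^ (-a)) volume 0 r := by
  refine (intervalIntegral.intervalIntegrable_rpow' (by linarith)).mul_continuousOn ?_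
  refine (continuous_add_const 1).continuousOn.rpow_const fun v hv => Or.inl ?_
  rw [uIcc_of_le hr] at hv
  exact (by linarith [hv.1] : (0 : ℝ) < v + 1).ne'

lemma integral_rpow_sub_one (hs : 0 < s) : ∫ v in (0 : ℝ)..r, v ^ (s - 1) = r ^ s / s := by
  rw [integral_rpow (Or.inl (by linarith)), sub_add_cancel, Real.zero_rpow hs.ne', sub_zero]

lemma integral_rpow_sub_one_mul_add_one_rpow_le (hs : 0 < s) (ha : 0 ≤ a) (hr : 0 ≤ r) :
    ∫ v in (0 : ℝ)..r, v ^ (s - 1) * (v + 1) ^ (-a) ≤ r ^ s / s := by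
  rw [← integral_rpow_sub_one hs]
  refine intervalIntegral.integral_mono_on hr
    (intervalIntegrable_rpow_sub_one_mul_add_one_rpow hs hr)
    (intervalIntegral.intervalIntegrable_rpow' (by linarith)) fun v hv => ?_
  exact mul_le_of_le_one_right (Real.rpow_nonneg hv.1 _)
    (Real.rpow_le_one_of_one_le_of_nonpos (by linarith [hv.1]) (by linarith))

lemma le_integral_rpow_sub_one_mul_add_one_rpow (hs : 0 < s) (ha : 0 ≤ a) (hr : 0 ≤ r) :
    (1 + r) ^ (-a) * (r ^ s / s) ≤ ∫ v in (0 : ℝ)..r, v ^ (s - 1) * (v + 1) ^ (-a) := by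
  rw [← integral_rpow_sub_one hs, ← intervalIntegral.integral_const_mul]
  refine intervalIntegral.integral_mono_on hr
    ((intervalIntegral.intervalIntegrable_rpow' (by linarith)).const_mul _)
    (intervalIntegrable_rpow_sub_one_mul_add_one_rpow hs hr) fun v hv => ?_
  rw [mul_comm]
  exact mul_le_mul_of_nonneg_left
    (Real.rpow_le_rpow_of_nonpos (by linarith [hv.1]) (by linarith [hv.2]) (by linarith))
    (Real.rpow_nonneg hv.1 _)

lemma tendsto_integral_rpow_sub_one_mul_add_one_rpow_div_rpow (hs : 0 < s) (ha : 0 ≤ a) :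
    Tendsto (fun r : ℝ => (∫ v in (0 : ℝ)..r, v ^ (s - 1) * (v + 1) ^ (-a)) / r ^ s)
      (𝓝[>] 0) (𝓝 (1 / s)) := by
  have hlower : Tendsto (fun r : ℝ => (1 + r) ^ (-a) * (1 / s)) (𝓝[>] 0) (𝓝 (1 / s)) := by
    have : Tendsto (fun r : ℝ => (1 + r) ^ (-a) * (1 / s)) (𝓝 0) (𝓝 ((1 + 0) ^ (-a) * (1 / s))) :=
      ((tendsto_const_nhds.add tendsto_id).rpow_const (Or.inl (by norm_num))).mul_const _
    simpa using this.mono_left nhdsWithin_le_nhds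
  refine tendsto_of_tendsto_of_tendsto_of_le_of_le' hlower tendsto_const_nhds ?_ ?_ <;>
    filter_upwards [self_mem_nhdsWithin] with r (hr : 0 < r)
  · rw [le_div_iff₀ (Real.rpow_pos_of_pos hr s), mul_assoc, one_div_mul_eq_div]
    exact le_integral_rpow_sub_one_mul_add_one_rpow hs ha hr.le
  · rw [div_le_iff₀ (Real.rpow_pos_of_pos hr s), one_div_mul_eq_div]
    exact integral_rpow_sub_one_mul_add_one_rpow_le hs ha hr.le

end IntegralNearZero

lemma one_sub_norm_sq_pos_of_mem_ball {E : Type*} [SeminormedAddCommGroup E] {x : E}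
    (hx : x ∈ Metric.ball (0 : E) 1) : 0 < 1 - ‖x‖ ^ 2 := by
  rw [mem_ball_zero_iff] at hx
  nlinarith [norm_nonneg x]

section Ball

variable {N : ℕ} {x z θ : EuclideanSpace ℝ (Fin N)}

lemma boggioRho_of_mem_ball (hx : x ∈ Metric.ball (0 : EuclideanSpace ℝ (Fin N)) 1)
    (hz : z ∈ Metric.ball (0 : EuclideanSpace ℝ (Fin N)) 1) :
    boggioRho x z = (1 - ‖x‖ ^ 2) * (1 - ‖z‖ ^ 2) / ‖x - z‖ ^ 2 := by
  rw [boggioRho, max_eq_left (one_sub_norm_sq_pos_of_mem_ball hx).le,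
    max_eq_left (one_sub_norm_sq_pos_of_mem_ball hz).le]

lemma boggioG_div_one_sub_norm_sq_rpow_eq (s : ℝ) (hx : x ∈ Metric.ball (0 : EuclideanSpace ℝ (Fin N)) 1)
    (hz : z ∈ Metric.ball (0 : EuclideanSpace ℝ (Fin N)) 1) (hxz : x ≠ z) :
    boggioG N s x z / (1 - ‖z‖ ^ 2) ^ s =
      boggioConst N s * (1 - ‖x‖ ^ 2) ^ s * ‖x - z‖ ^ (-(N : ℝ)) *
        ((∫ v in (0 : ℝ)..boggioRho x z, v ^ (s - 1) * (v + 1) ^ (-((N : ℝ) / 2))) /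
          boggioRho x z ^ s) := by
  have hX := one_sub_norm_sq_pos_of_mem_ball hx
  have hD := one_sub_norm_sq_pos_of_mem_ball hz
  have hA : 0 < ‖x - z‖ := norm_pos_iff.mpr (sub_ne_zero.mpr hxz)
  have hρ : boggioRho x z ^ s = (1 - ‖x‖ ^ 2) ^ s * (1 - ‖z‖ ^ 2) ^ s / ‖x - z‖ ^ (2 * s) := by
    rw [boggioRho_of_mem_ball hx hz, Real.div_rpow (by positivity) (by positivity),
      Real.mul_rpow hX.le hD.le, ← Real.rpow_natCast_mul hA.le, Nat.cast_ofNat]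
  have hA' : ‖x - z‖ ^ (2 * s - N) = ‖x - z‖ ^ (2 * s) * ‖x - z‖ ^ (-(N : ℝ)) := by
    rw [Real.rpow_sub hA, Real.rpow_neg hA.le, div_eq_mul_inv]
  have := (Real.rpow_pos_of_pos hX s).ne'
  have := (Real.rpow_pos_of_pos hD s).ne'
  have := (Real.rpow_pos_of_pos hA (2 * s)).ne'
  rw [boggioG, hρ, hA']
  field_simp

lemma tendsto_boggioRho_nhdsWithin_ball (hx : x ∈ Metric.ball (0 : EuclideanSpace ℝ (Fin N)) 1)
    (hθ : ‖θ‖ = 1) :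
    Tendsto (boggioRho x) (𝓝[Metric.ball 0 1] θ) (𝓝[>] 0) := by
  have hxθ : x ≠ θ := by rintro rfl; simp [hθ] at hx
  refine tendsto_nhdsWithin_iff.mpr ⟨?_, ?_⟩
  · have hcont : ContinuousAt (boggioRho x) θ := by
      refine ContinuousAt.div (by fun_prop) (by fun_prop) ?_
      exact pow_ne_zero 2 (norm_ne_zero_iff.mpr (sub_ne_zero.mpr hxθ))
    simpa [boggioRho, hθ] using hcont.tendsto.mono_left nhdsWithin_le_nhds
  · filter_upwards [self_mem_nhdsWithin,
      nhdsWithin_le_nhds (eventually_ne_nhds hxθ.symm)] with z hz hzx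
    rw [mem_Ioi, boggioRho_of_mem_ball hx hz]
    have := one_sub_norm_sq_pos_of_mem_ball hx
    have := one_sub_norm_sq_pos_of_mem_ball hz
    have : 0 < ‖x - z‖ := norm_pos_iff.mpr (sub_ne_zero.mpr hzx.symm)
    positivity

end Ball

theorem martin_kernel_limit_general
    (N : ℕ) (s : ℝ) (hs : 0 < s)
    (x : EuclideanSpace ℝ (Fin N)) (hx : x ∈ Metric.ball (0 : EuclideanSpace ℝ (Fin N)) 1)
    (θ : EuclideanSpace ℝ (Fin N)) (hθ : ‖θ‖ = 1) :
    Filter.Tendsto (fun z : EuclideanSpace ℝ (Fin N) => boggioG N s x z / (1 - ‖z‖ ^ 2) ^ s)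
      (nhdsWithin θ (Metric.ball (0 : EuclideanSpace ℝ (Fin N)) 1))
      (nhds (boggioConst N s / s * (1 - ‖x‖ ^ 2) ^ s / ‖θ - x‖ ^ (N : ℝ))) := by
  have hxθ : x ≠ θ := by rintro rfl; simp [hθ] at hx
  have hdist : Tendsto (fun z => ‖x - z‖ ^ (-(N : ℝ))) (𝓝[Metric.ball 0 1] θ)
      (𝓝 (‖x - θ‖ ^ (-(N : ℝ)))) :=
    ((continuous_const.sub continuous_id).norm.tendsto θ).mono_left nhdsWithin_le_nhds
      |>.rpow_const (Or.inl (norm_ne_zero_iff.mpr (sub_ne_zero.mpr hxθ)))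
  have hratio := (tendsto_integral_rpow_sub_one_mul_add_one_rpow_div_rpow hs
    (by positivity : (0 : ℝ) ≤ N / 2)).comp (tendsto_boggioRho_nhdsWithin_ball hx hθ)
  have hlim : boggioConst N s * (1 - ‖x‖ ^ 2) ^ s * ‖x - θ‖ ^ (-(N : ℝ)) * (1 / s) =
      boggioConst N s / s * (1 - ‖x‖ ^ 2) ^ s / ‖θ - x‖ ^ (N : ℝ) := by
    rw [norm_sub_rev, Real.rpow_neg (norm_nonneg _)]
    ring
  rw [← hlim]
  refine ((tendsto_const_nhds.mul hdist).mul hratio).congr' ?_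
  filter_upwards [self_mem_nhdsWithin,
    nhdsWithin_le_nhds (eventually_ne_nhds hxθ.symm)] with z hz hzx
  exact (boggioG_div_one_sub_norm_sq_rpow_eq s hx hz hzx.symm).symm

theorem martin_kernel_limit
    (N : ℕ) (hN : 0 < N) (s : ℝ) (hs : 0 < s)
    (x : EuclideanSpace ℝ (Fin N)) (hx : x ∈ Metric.ball (0 : EuclideanSpace ℝ (Fin N)) 1)
    (θ : EuclideanSpace ℝ (Fin N)) (hθ : ‖θ‖ = 1) :
    Filter.Tendsto (fun z : EuclideanSpace ℝ (Fin N) => boggioG N s x z / (1 - ‖z‖ ^ 2) ^ s)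
      (nhdsWithin θ (Metric.ball (0 : EuclideanSpace ℝ (Fin N)) 1))
      (nhds (boggioConst N s / s * (1 - ‖x‖ ^ 2) ^ s / ‖θ - x‖ ^ (N : ℝ))) :=
  martin_kernel_limit_general N s hs x hx θ hθ
end

section
/- Let N ∈ ℕ, s > 0, and C_s := sup_{x∈ℝ^N, |x|≥2} ∫_{|y|≥1} (1+|x|^{N+2s}) / ((1+|x+y|^{N+2s}) |y|^{N+2s}) dy. Then C_s < ∞; that is, there is a constant C = C(N,s) such that for all x with |x| ≥ 2, ∫_{|y|≥1} (1+|x|^{N+2s}) / ((1+|x+y|^{N+2s})|y|^{N+2s}) dy ≤ C. -/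
/-!
By the triangle inequality one of `‖x + y‖`, `‖y‖` is at least `‖x‖ / 2`, whence
`1 + ‖x‖ ^ p ≤ 2 ^ p (1 + ‖x + y‖ ^ p) + 2 ^ p ‖y‖ ^ p` and the integrand is at most
`2 ^ p ((‖y‖ ^ p)⁻¹ + (1 + ‖x + y‖ ^ p)⁻¹)`. For `p = N + 2s` larger than the dimension both
terms are integrable (on `‖y‖ ≥ 1` for the first), and translation invariance of Lebesgue
measure makes the integral of the second independent of `x`.
-/

open MeasureTheory Module

lemma Real.rpow_le_two_rpow_mul_add_rpow {a b c p : ℝ} (ha : 0 ≤ a) (hb : 0 ≤ b) (hc : 0 ≤ c)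
    (hp : 0 ≤ p) (habc : a ≤ b + c) : a ^ p ≤ 2 ^ p * (b ^ p + c ^ p) := by
  have hmax : max b c ^ p ≤ b ^ p + c ^ p := by
    rcases le_total b c with h | h
    · rw [max_eq_right h]; linarith [Real.rpow_nonneg hb p]
    · rw [max_eq_left h]; linarith [Real.rpow_nonneg hc p]
  calc a ^ p ≤ (2 * max b c) ^ p := by
        gcongr; linarith [le_max_left b c, le_max_right b c]
    _ = 2 ^ p * max b c ^ p := Real.mul_rpow zero_le_two (le_max_of_le_left hb)
    _ ≤ 2 ^ p * (b ^ p + c ^ p) := by gcongr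

lemma Real.one_add_rpow_div_le {a u t p : ℝ} (ha : 0 ≤ a) (hu : 0 ≤ u) (ht : 0 < t)
    (hp : 0 ≤ p) (haut : a ≤ u + t) :
    (1 + a ^ p) / ((1 + u ^ p) * t ^ p) ≤ 2 ^ p * ((t ^ p)⁻¹ + (1 + u ^ p)⁻¹) := by
  have hup : 0 ≤ u ^ p := Real.rpow_nonneg hu p
  have htp : 0 < t ^ p := Real.rpow_pos_of_pos ht p
  have h2p : 1 ≤ (2 : ℝ) ^ p := Real.one_le_rpow one_le_two hp
  have hnum : 1 + a ^ p ≤ 2 ^ p * (1 + u ^ p) + 2 ^ p * t ^ p := by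
    nlinarith [Real.rpow_le_two_rpow_mul_add_rpow ha hu ht.le hp haut]
  calc (1 + a ^ p) / ((1 + u ^ p) * t ^ p)
      ≤ (2 ^ p * (1 + u ^ p) + 2 ^ p * t ^ p) / ((1 + u ^ p) * t ^ p) := by gcongr
    _ = 2 ^ p * ((t ^ p)⁻¹ + (1 + u ^ p)⁻¹) := by field_simp

section Integrability

variable {E : Type*} [NormedAddCommGroup E] [NormedSpace ℝ E] [FiniteDimensional ℝ E]
  [MeasurableSpace E] [BorelSpace E] (μ : Measure E) [μ.IsAddHaarMeasure]
  {p : ℝ}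

lemma integrable_inv_one_add_norm_rpow (hp : (finrank ℝ E : ℝ) < p) :
    Integrable (fun x : E ↦ (1 + ‖x‖ ^ p)⁻¹) μ := by
  have hp0 : 0 ≤ p := (Nat.cast_nonneg _).trans hp.le
  refine ((integrable_one_add_norm hp).const_mul (2 ^ p)).mono'
    (Measurable.aestronglyMeasurable (by fun_prop)) (ae_of_all _ fun x ↦ ?_)
  have hbound : (1 + ‖x‖) ^ p ≤ 2 ^ p * (1 + ‖x‖ ^ p) := by
    simpa using Real.rpow_le_two_rpow_mul_add_rpow (by positivity) zero_le_one
      (norm_nonneg x) hp0 le_rfl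
  rw [Real.norm_of_nonneg (by positivity), Real.rpow_neg (by positivity), ← div_eq_mul_inv,
    le_div_iff₀ (by positivity)]
  calc (1 + ‖x‖ ^ p)⁻¹ * (1 + ‖x‖) ^ p ≤ (1 + ‖x‖ ^ p)⁻¹ * (2 ^ p * (1 + ‖x‖ ^ p)) := by
        gcongr
    _ = 2 ^ p := by field_simp

lemma integrableOn_inv_norm_rpow_one_le_norm (hp : (finrank ℝ E : ℝ) < p) :
    IntegrableOn (fun x : E ↦ (‖x‖ ^ p)⁻¹) {x | 1 ≤ ‖x‖} μ := by
  have hp0 : 0 ≤ p := (Nat.cast_nonneg _).trans hp.le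
  have hS : MeasurableSet {x : E | 1 ≤ ‖x‖} := measurableSet_le measurable_const measurable_norm
  refine ((integrable_one_add_norm hp).const_mul (2 ^ p)).integrableOn.mono'
    (Measurable.aestronglyMeasurable (by fun_prop)) (ae_restrict_of_forall_mem hS fun x hx ↦ ?_)
  have hx : 1 ≤ ‖x‖ := hx
  have hbound : (1 + ‖x‖) ^ p ≤ 2 ^ p * ‖x‖ ^ p := by
    rw [← Real.mul_rpow zero_le_two (norm_nonneg x)]
    gcongr
    linarith
  rw [Real.norm_of_nonneg (by positivity), Real.rpow_neg (by positivity), ← div_eq_mul_inv,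
    le_div_iff₀ (by positivity)]
  calc (‖x‖ ^ p)⁻¹ * (1 + ‖x‖) ^ p ≤ (‖x‖ ^ p)⁻¹ * (2 ^ p * ‖x‖ ^ p) := by gcongr
    _ = 2 ^ p := by field_simp

end Integrability

theorem uniform_weighted_integral_bound_general
    (N : ℕ) (s : ℝ) (hs : 0 < s) :
    ∃ C : ℝ, ∀ x : EuclideanSpace ℝ (Fin N), 2 ≤ ‖x‖ →
      (∫ y in {y : EuclideanSpace ℝ (Fin N) | 1 ≤ ‖y‖},
          (1 + ‖x‖ ^ ((N : ℝ) + 2 * s)) /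
            ((1 + ‖x + y‖ ^ ((N : ℝ) + 2 * s)) * ‖y‖ ^ ((N : ℝ) + 2 * s))) ≤ C := by
  set p : ℝ := (N : ℝ) + 2 * s
  have hp : (finrank ℝ (EuclideanSpace ℝ (Fin N)) : ℝ) < p := by
    rw [finrank_euclideanSpace_fin]; linarith
  set S := {y : EuclideanSpace ℝ (Fin N) | 1 ≤ ‖y‖}
  have hS : MeasurableSet S := measurableSet_le measurable_const measurable_norm
  have hf := integrableOn_inv_norm_rpow_one_le_norm volume hp
  have hg := integrable_inv_one_add_norm_rpow volume hp
  refine ⟨2 ^ p * ((∫ y in S, (‖y‖ ^ p)⁻¹) + ∫ z : EuclideanSpace ℝ (Fin N), (1 + ‖z‖ ^ p)⁻¹),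
    fun x _ ↦ ?_⟩
  have hgx : Integrable fun y ↦ (1 + ‖x + y‖ ^ p)⁻¹ := hg.comp_add_left x
  calc (∫ y in S, (1 + ‖x‖ ^ p) / ((1 + ‖x + y‖ ^ p) * ‖y‖ ^ p))
      ≤ ∫ y in S, 2 ^ p * ((‖y‖ ^ p)⁻¹ + (1 + ‖x + y‖ ^ p)⁻¹) := by
        refine integral_mono_of_nonneg (ae_of_all _ fun y ↦ by positivity)
          ((hf.add hgx.integrableOn).const_mul _) (ae_restrict_of_forall_mem hS fun y hy ↦ ?_)
        exact Real.one_add_rpow_div_le (norm_nonneg x) (norm_nonneg _) (one_pos.trans_le hy)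
          (by positivity) (by simpa using norm_sub_le (x + y) y)
    _ = 2 ^ p * ((∫ y in S, (‖y‖ ^ p)⁻¹) + ∫ y in S, (1 + ‖x + y‖ ^ p)⁻¹) := by
        rw [integral_const_mul, integral_add hf hgx.integrableOn]
    _ ≤ 2 ^ p * ((∫ y in S, (‖y‖ ^ p)⁻¹) + ∫ y, (1 + ‖x + y‖ ^ p)⁻¹) := by
        gcongr
        · exact ae_of_all _ fun y ↦ by positivity
        · exact Measure.restrict_le_self
    _ = 2 ^ p * ((∫ y in S, (‖y‖ ^ p)⁻¹) + ∫ z, (1 + ‖z‖ ^ p)⁻¹) := by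
        rw [integral_add_left_eq_self (fun z ↦ (1 + ‖z‖ ^ p)⁻¹) x]

theorem uniform_weighted_integral_bound
    (N : ℕ) (hN : 0 < N) (s : ℝ) (hs : 0 < s) :
    ∃ C : ℝ, ∀ x : EuclideanSpace ℝ (Fin N), 2 ≤ ‖x‖ →
      (∫ y in {y : EuclideanSpace ℝ (Fin N) | 1 ≤ ‖y‖},
          (1 + ‖x‖ ^ ((N : ℝ) + 2 * s)) /
            ((1 + ‖x + y‖ ^ ((N : ℝ) + 2 * s)) * ‖y‖ ^ ((N : ℝ) + 2 * s))) ≤ C :=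
  uniform_weighted_integral_bound_general N s hs
end

section
/- Let N ∈ ℕ, s > 0, and let f ∈ L^∞(B) where B is the open unit ball of ℝ^N. Define G_s by Boggio's formula: G_s(x,y) = k_{N,s}|x−y|^{2s−N} ∫_0^{ρ(x,y)} v^{s−1}(v+1)^{−N/2} dv with ρ(x,y) = (1−|x|²)₊(1−|y|²)₊/|x−y|², and u(x) := ∫_B G_s(x,y) f(y) dy. Then there is a constant C = C(N,s) such that ‖u‖_{L^∞(B)} ≤ C ‖f‖_{L^∞(B)}. -/
open MeasureTheory

/-!
For `0 ≤ δ ≤ N/2` one has `(v+1)^{-N/2} ≤ v^{-δ}`, and `ρ(x,y) ≤ |x-y|^{-2}`; integrating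
`v^{s-1-δ}` then bounds Boggio's kernel by `k_{N,s}/(s-δ) · |x-y|^{2δ-N}`. For `0 < δ < s` this
majorant is locally integrable, and by translation invariance its integral over `y ∈ B` is at
most `∫_{|z|<2} |z|^{2δ-N} dz`, uniformly in `x ∈ B`.
-/

open Metric

section Potential

variable {E : Type*} [NormedAddCommGroup E]

lemma ball_subset_preimage_sub_left_ball {x : E} {r R : ℝ} (hx : ‖x‖ + r ≤ R) :
    ball 0 r ⊆ (x - ·) ⁻¹' ball 0 R := fun y hy => by
  rw [Set.mem_preimage, mem_ball_zero_iff] at *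
  linarith [norm_sub_le x y]

variable [MeasurableSpace E]

lemma integrableOn_ball_norm_rpow [NormedSpace ℝ E] [FiniteDimensional ℝ E] [BorelSpace E]
    (μ : Measure E) [μ.IsAddHaarMeasure] (hd : 1 ≤ Module.finrank ℝ E) {p : ℝ}
    (hp : -(Module.finrank ℝ E : ℝ) < p) (R : ℝ) :
    IntegrableOn (fun z : E => ‖z‖ ^ p) (ball 0 R) μ :=
  integrableOn_ball_of_norm_le_rpow (C := 1) (α := -p) hd (by linarith)
    (ae_of_all _ fun z => by
      rw [neg_neg, one_mul, Real.norm_of_nonneg (Real.rpow_nonneg (norm_nonneg z) p)])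
    (measurable_norm.pow_const p).aestronglyMeasurable

variable [MeasurableAdd E] [MeasurableNeg E]
  (μ : Measure E) [μ.IsAddLeftInvariant] [μ.IsNegInvariant]

lemma integrableOn_ball_comp_sub_left {g : E → ℝ} {x : E} {r R : ℝ} (hx : ‖x‖ + r ≤ R)
    (hg : IntegrableOn g (ball 0 R) μ) :
    IntegrableOn (fun y => g (x - y)) (ball 0 r) μ :=
  (((Measure.measurePreserving_sub_left μ x).integrableOn_comp_preimage
    (measurableEmbedding_subLeft x)).2 hg).mono_set (ball_subset_preimage_sub_left_ball hx)

lemma setIntegral_ball_comp_sub_left_le {g : E → ℝ} (hg0 : 0 ≤ g) {x : E} {r R : ℝ}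
    (hx : ‖x‖ + r ≤ R) (hg : IntegrableOn g (ball 0 R) μ) :
    ∫ y in ball 0 r, g (x - y) ∂μ ≤ ∫ z in ball 0 R, g z ∂μ := by
  have hpre := (Measure.measurePreserving_sub_left μ x).integrableOn_comp_preimage
    (measurableEmbedding_subLeft x) |>.2 hg
  calc ∫ y in ball 0 r, g (x - y) ∂μ ≤ ∫ y in (x - ·) ⁻¹' ball 0 R, g (x - y) ∂μ :=
        setIntegral_mono_set hpre (ae_of_all _ fun y => hg0 (x - y))
          (ball_subset_preimage_sub_left_ball hx).eventuallyLE
    _ = ∫ z in ball 0 R, g z ∂μ :=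
        (Measure.measurePreserving_sub_left μ x).setIntegral_preimage_emb
          (measurableEmbedding_subLeft x) g _

lemma abs_setIntegral_ball_mul_le [OpensMeasurableSpace E] {K f g : E → ℝ} {x : E}
    {r R M : ℝ} (hg0 : 0 ≤ g) (hx : ‖x‖ + r ≤ R) (hg : IntegrableOn g (ball 0 R) μ)
    (hK : ∀ y, |K y| ≤ g (x - y))
    (hM : 0 ≤ M) (hf : ∀ y ∈ ball 0 r, |f y| ≤ M) :
    |∫ y in ball 0 r, K y * f y ∂μ| ≤ M * ∫ z in ball 0 R, g z ∂μ := by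
  have hbound : ∀ᵐ y ∂μ.restrict (ball 0 r), ‖K y * f y‖ ≤ M * g (x - y) := by
    filter_upwards [ae_restrict_mem measurableSet_ball] with y hy
    rw [Real.norm_eq_abs, abs_mul, mul_comm M]
    exact mul_le_mul (hK y) (hf y hy) (abs_nonneg _) (hg0 _)
  calc |∫ y in ball 0 r, K y * f y ∂μ|
      ≤ ∫ y in ball 0 r, M * g (x - y) ∂μ :=
        norm_integral_le_of_norm_le ((integrableOn_ball_comp_sub_left μ hx hg).const_mul M) hbound
    _ = M * ∫ y in ball 0 r, g (x - y) ∂μ := integral_const_mul M _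
    _ ≤ M * ∫ z in ball 0 R, g z ∂μ :=
        mul_le_mul_of_nonneg_left (setIntegral_ball_comp_sub_left_le μ hg0 hx hg) hM

end Potential

lemma rpow_sub_one_mul_add_one_rpow_neg_le {v s a δ : ℝ} (hv : 0 < v) (hδ : 0 ≤ δ)
    (hδa : δ ≤ a) : v ^ (s - 1) * (v + 1) ^ (-a) ≤ v ^ (s - 1 - δ) := by
  have hdecay : (v + 1) ^ (-a) ≤ v ^ (-δ) := by
    rw [Real.rpow_neg (by linarith), Real.rpow_neg hv.le]
    refine inv_anti₀ (Real.rpow_pos_of_pos hv δ) ?_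
    calc v ^ δ ≤ (v + 1) ^ δ := Real.rpow_le_rpow hv.le (by linarith) hδ
      _ ≤ (v + 1) ^ a := Real.rpow_le_rpow_of_exponent_le (by linarith) hδa
  calc v ^ (s - 1) * (v + 1) ^ (-a) ≤ v ^ (s - 1) * v ^ (-δ) := by gcongr
    _ = v ^ (s - 1 - δ) := by rw [← Real.rpow_add hv]; ring_nf

lemma abs_integral_rpow_sub_one_mul_add_one_rpow_neg_le {ρ s a δ : ℝ} (hρ : 0 ≤ ρ)
    (hδ : 0 ≤ δ) (hδs : δ < s) (hδa : δ ≤ a) :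
    |∫ v in (0:ℝ)..ρ, v ^ (s - 1) * (v + 1) ^ (-a)| ≤ ρ ^ (s - δ) / (s - δ) := by
  rw [← Real.norm_eq_abs]
  calc ‖∫ v in (0:ℝ)..ρ, v ^ (s - 1) * (v + 1) ^ (-a)‖
        ≤ ∫ v in (0:ℝ)..ρ, v ^ (s - 1 - δ) := by
        refine intervalIntegral.norm_integral_le_of_norm_le hρ (ae_of_all _ fun v hv => ?_)
          (intervalIntegral.intervalIntegrable_rpow' (by linarith))
        rw [Real.norm_of_nonneg (by have := hv.1.le; positivity)]
        exact rpow_sub_one_mul_add_one_rpow_neg_le hv.1 hδ hδa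
    _ = ρ ^ (s - δ) / (s - δ) := by
        rw [integral_rpow (Or.inl (by linarith)), show s - 1 - δ + 1 = s - δ by ring,
          Real.zero_rpow (by linarith), sub_zero]

section Boggio

variable {N : ℕ}

lemma boggioRho_nonneg (x y : EuclideanSpace ℝ (Fin N)) : 0 ≤ boggioRho x y := by
  unfold boggioRho
  positivity

lemma boggioRho_le_inv_norm_sub_sq (x y : EuclideanSpace ℝ (Fin N)) :
    boggioRho x y ≤ (‖x - y‖ ^ 2)⁻¹ := by
  have hx : max (1 - ‖x‖ ^ 2) 0 ≤ 1 := max_le (by nlinarith [sq_nonneg ‖x‖]) zero_le_one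
  have hy : max (1 - ‖y‖ ^ 2) 0 ≤ 1 := max_le (by nlinarith [sq_nonneg ‖y‖]) zero_le_one
  rw [boggioRho, ← one_div]
  gcongr
  exact mul_le_one₀ hx (le_max_right _ _) hy

lemma boggioRho_self (x : EuclideanSpace ℝ (Fin N)) : boggioRho x x = 0 := by
  simp [boggioRho]

lemma abs_boggioG_le {s δ : ℝ} (hδ : 0 ≤ δ) (hδs : δ < s) (hδN : δ ≤ (N : ℝ) / 2)
    (x y : EuclideanSpace ℝ (Fin N)) :
    |boggioG N s x y| ≤ |boggioConst N s| / (s - δ) * ‖x - y‖ ^ (2 * δ - N) := by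
  rcases eq_or_ne x y with rfl | hxy
  · have hsδ : 0 < s - δ := by linarith
    simp only [boggioG, boggioRho_self, intervalIntegral.integral_same, mul_zero, abs_zero]
    positivity
  set R := ‖x - y‖
  have hR : 0 < R := norm_sub_pos_iff.mpr hxy
  have hρ := Real.rpow_le_rpow (boggioRho_nonneg x y) (boggioRho_le_inv_norm_sub_sq x y)
    (z := s - δ) (by linarith)
  have hpow : R ^ (2 * s - N) * (R ^ 2)⁻¹ ^ (s - δ) = R ^ (2 * δ - N) := by
    rw [← Real.rpow_two, ← Real.rpow_neg_one, ← Real.rpow_mul hR.le, ← Real.rpow_mul hR.le,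
      ← Real.rpow_add hR]
    ring_nf
  calc |boggioG N s x y|
      = |boggioConst N s| * R ^ (2 * s - N) *
          |∫ v in (0:ℝ)..boggioRho x y, v ^ (s - 1) * (v + 1) ^ (-((N : ℝ) / 2))| := by
        rw [boggioG, abs_mul, abs_mul, abs_of_nonneg (Real.rpow_nonneg hR.le _)]
    _ ≤ |boggioConst N s| * R ^ (2 * s - N) * ((R ^ 2)⁻¹ ^ (s - δ) / (s - δ)) := by
        gcongr
        exact (abs_integral_rpow_sub_one_mul_add_one_rpow_neg_le (boggioRho_nonneg x y) hδ hδs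
          hδN).trans (by gcongr)
    _ = |boggioConst N s| / (s - δ) * R ^ (2 * δ - N) := by
        rw [← hpow]; ring

end Boggio

theorem green_potential_Linfty_bound
    (N : ℕ) (hN : 0 < N) (s : ℝ) (hs : 0 < s) :
    ∃ C : ℝ, ∀ (f : EuclideanSpace ℝ (Fin N) → ℝ) (M : ℝ),
      (∀ y ∈ Metric.ball (0 : EuclideanSpace ℝ (Fin N)) 1, |f y| ≤ M) →
      ∀ x ∈ Metric.ball (0 : EuclideanSpace ℝ (Fin N)) 1,
        |∫ y in Metric.ball (0 : EuclideanSpace ℝ (Fin N)) 1, boggioG N s x y * f y| ≤ C * M := by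
  have hNpos : (0 : ℝ) < N := Nat.cast_pos.mpr hN
  obtain ⟨δ, hδ, hδs, hδN⟩ : ∃ δ : ℝ, 0 < δ ∧ δ < s ∧ δ ≤ (N : ℝ) / 2 :=
    ⟨min s N / 2, by positivity, by linarith [min_le_left s N],
      by linarith [min_le_right s N]⟩
  set A := |boggioConst N s| / (s - δ)
  set g := fun z : EuclideanSpace ℝ (Fin N) => A * ‖z‖ ^ (2 * δ - N)
  have hg0 : 0 ≤ g := fun z => mul_nonneg (by positivity) (Real.rpow_nonneg (norm_nonneg z) _)
  have hg : IntegrableOn g (ball 0 2) :=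
    (integrableOn_ball_norm_rpow volume (by rw [finrank_euclideanSpace_fin]; exact hN)
      (by rw [finrank_euclideanSpace_fin]; linarith) 2).const_mul A
  refine ⟨∫ z in ball 0 2, g z, fun f M hf x hx => ?_⟩
  have hM : 0 ≤ M := (abs_nonneg _).trans (hf 0 (mem_ball_self one_pos))
  have hx2 : ‖x‖ + 1 ≤ 2 := by linarith [mem_ball_zero_iff.mp hx]
  rw [mul_comm]
  exact abs_setIntegral_ball_mul_le volume hg0 hx2 hg (abs_boggioG_le hδ.le hδs hδN x) hM hf
end
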